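/- arXiv:2105.14363 — 2 statements merged into one kernel-verified Lean document; each statement's English description precedes it below -/
import Mathlib

section
/- If B and C are d×d real symmetric positive definite matrices with B ⪰ C (i.e., B − C is positive semidefinite), then sup over nonzero x of (xᵀBx)/(xᵀCx) is at most det(B)/det(C). -/
/-!
Factor `C = yᴴ y` with `y` invertible and write `B = yᴴ A y`. Then `C ≤ B` in the Loewner order
says `1 ≤ A`, so every eigenvalue of `A` is at least `1` and hence at most the product of all of
them, `det A = det B / det C`. Thus `A ≤ (det A) • 1`; conjugating back gives
`B ≤ (det B / det C) • C`, which bounds the Rayleigh quotient.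
-/

open Matrix

theorem IsUnit.star_left_conjugate_le_conjugate_iff {R : Type*} [Ring R] [PartialOrder R]
    [StarRing R] [StarOrderedRing R] {u a b : R} (hu : IsUnit u) :
    star u * a * u ≤ star u * b * u ↔ a ≤ b := by
  rw [← sub_nonneg, ← sub_mul, ← mul_sub, hu.star_left_conjugate_nonneg_iff, sub_nonneg]

namespace Matrix

open scoped MatrixOrder

variable {n : Type*} [Fintype n]

theorem dotProduct_mulVec_div_le {B C : Matrix n n ℝ} {q : ℝ} (hC : C.PosDef)
    (hBC : B ≤ q • C) {x : n → ℝ} (hx : x ≠ 0) : (x ⬝ᵥ B *ᵥ x) / (x ⬝ᵥ C *ᵥ x) ≤ q := by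
  have hCx : 0 < x ⬝ᵥ C *ᵥ x := by simpa using hC.dotProduct_mulVec_pos hx
  have h := (le_iff.mp hBC).dotProduct_mulVec_nonneg x
  simp only [star_trivial, sub_mulVec, dotProduct_sub, smul_mulVec, dotProduct_smul,
    smul_eq_mul, sub_nonneg] at h
  rwa [div_le_iff₀ hCx]

variable [DecidableEq n]

theorem le_det_smul_one_of_one_le {A : Matrix n n ℝ} (hA : 1 ≤ A) : A ≤ A.det • 1 := by
  have hAh : A.IsHermitian := by simpa using (le_iff.mp hA).isHermitian.add isHermitian_one
  have one_le : ∀ i, 1 ≤ hAh.eigenvalues i := fun i =>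
    (CFC.one_le_iff A hAh.isSelfAdjoint).mp hA _ (hAh.eigenvalues_mem_spectrum_real i)
  have hdet : A.det = ∏ j, hAh.eigenvalues j := by simpa using hAh.det_eq_prod_eigenvalues
  rw [← Algebra.algebraMap_eq_smul_one]
  refine le_algebraMap_of_spectrum_le fun x hx => ?_
  obtain ⟨i, rfl⟩ := hAh.spectrum_real_eq_range_eigenvalues ▸ hx
  rw [hdet]
  simpa using Finset.prod_le_prod_of_subset_of_one_le (Finset.subset_univ {i})
    (by simpa using zero_le_one.trans (one_le i)) (fun j _ _ => one_le j)

theorem le_det_div_det_smul_of_le {B C : Matrix n n ℝ} (hC : C.PosDef) (hCB : C ≤ B) :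
    B ≤ (B.det / C.det) • C := by
  obtain ⟨y, hy, rfl⟩ := CStarAlgebra.isStrictlyPositive_iff_eq_star_mul_self.mp
    hC.isStrictlyPositive
  obtain ⟨A, rfl⟩ : ∃ A, B = star y * A * y := by
    lift y to (Matrix n n ℝ)ˣ using hy
    refine ⟨star (y⁻¹ : (Matrix n n ℝ)ˣ).val * B * (y⁻¹ : (Matrix n n ℝ)ˣ).val, ?_⟩
    simp [← mul_assoc, ← star_mul]
  have h1A : 1 ≤ A := hy.star_left_conjugate_le_conjugate_iff.mp (by simpa using hCB)
  have hdet : (star y * A * y).det / (star y * y).det = A.det := by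
    have hCdet : (star y * y).det ≠ 0 := hC.det_pos.ne'
    rw [det_mul] at hCdet
    rw [det_mul, det_mul, det_mul, mul_right_comm, mul_div_cancel_left₀ _ hCdet]
  calc star y * A * y ≤ star y * (A.det • 1) * y :=
        star_left_conjugate_le_conjugate (le_det_smul_one_of_one_le h1A) y
    _ = _ := by rw [hdet]; simp

end Matrix

theorem rayleigh_quotient_le_det_ratio_general {d : ℕ}
    (B C : Matrix (Fin d) (Fin d) ℝ)
    (hC : C.PosDef) (hBC : (B - C).PosSemidef) :
    ∀ x : Fin d → ℝ, x ≠ 0 →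
      (x ⬝ᵥ B.mulVec x) / (x ⬝ᵥ C.mulVec x) ≤ B.det / C.det := by
  open scoped MatrixOrder in
  exact fun x hx => dotProduct_mulVec_div_le hC (le_det_div_det_smul_of_le hC hBC) hx

/-- If B ⪰ C ≻ 0 are symmetric matrices, then the Rayleigh quotient
    (xᵀBx)/(xᵀCx) is bounded by det(B)/det(C) for every nonzero x. -/
theorem rayleigh_quotient_le_det_ratio {d : ℕ}
    (B C : Matrix (Fin d) (Fin d) ℝ)
    (hB : B.IsSymm) (hC : C.PosDef) (hBC : (B - C).PosSemidef) :
    ∀ x : Fin d → ℝ, x ≠ 0 →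
      (x ⬝ᵥ B.mulVec x) / (x ⬝ᵥ C.mulVec x) ≤ B.det / C.det :=
  rayleigh_quotient_le_det_ratio_general B C hC hBC
end

section
/- Let φ₁, ..., φ_H ∈ ℝ^d be pairwise orthogonal vectors, φ = ∑_{h=1}^H φ_h, and Σ a symmetric positive definite d×d matrix. Then ∑_{h=1}^H ‖φ_h‖_{Σ^{-1}} ≤ √(H · λ_max(Σ)/λ_min(Σ)) · ‖φ‖_{Σ^{-1}}, where ‖v‖_M := √(vᵀMv). -/
/-!
Let `λ` and `Λ` be the extreme eigenvalues of `Σ`. Applying the functional calculus to `t ↦ t⁻¹`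
gives the Loewner bounds `Λ⁻¹ ≤ Σ⁻¹ ≤ λ⁻¹`, hence `‖v‖²_{Σ⁻¹} ≤ ‖v‖² / λ` and
`‖v‖² ≤ Λ ‖v‖²_{Σ⁻¹}`. By orthogonality `‖φ‖² = ∑ ‖φ_h‖²`, so
`∑ ‖φ_h‖²_{Σ⁻¹} ≤ ∑ ‖φ_h‖² / λ = ‖φ‖² / λ ≤ (Λ / λ) ‖φ‖²_{Σ⁻¹}`,
and Cauchy–Schwarz bounds `∑ ‖φ_h‖_{Σ⁻¹}` by `√H` times the square root of the left-hand side.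
-/

open Matrix
open scoped MatrixOrder

lemma Real.sum_sqrt_le_sqrt_card_mul_sum {ι : Type*} (s : Finset ι) {f : ι → ℝ}
    (hf : ∀ i, 0 ≤ f i) : ∑ i ∈ s, √(f i) ≤ √(s.card * ∑ i ∈ s, f i) := by
  simpa [Real.sqrt_mul (Nat.cast_nonneg _), mul_comm] using
    Real.sum_sqrt_mul_sqrt_le s hf (fun _ => zero_le_one)

namespace Matrix

lemma sum_dotProduct_sum_of_orthogonal {m ι α : Type*} [Fintype m] [Fintype ι]
    [NonUnitalNonAssocSemiring α] (v : ι → m → α) (h : ∀ i j, i ≠ j → v i ⬝ᵥ v j = 0) :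
    (∑ i, v i) ⬝ᵥ (∑ i, v i) = ∑ i, v i ⬝ᵥ v i := by
  rw [sum_dotProduct]
  refine Finset.sum_congr rfl fun i _ => ?_
  rw [dotProduct_sum]
  exact Finset.sum_eq_single i (fun j _ hji => h i j hji.symm) (by simp)

variable {n : Type*} [Fintype n]

lemma dotProduct_mulVec_le_of_le {A B : Matrix n n ℝ} (h : A ≤ B) (x : n → ℝ) :
    x ⬝ᵥ A *ᵥ x ≤ x ⬝ᵥ B *ᵥ x := by
  simpa only [star_trivial, sub_mulVec, dotProduct_sub, sub_nonneg] using
    (Matrix.le_iff.mp h).dotProduct_mulVec_nonneg x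

variable [DecidableEq n]

lemma dotProduct_algebraMap_mulVec (c : ℝ) (x : n → ℝ) :
    x ⬝ᵥ algebraMap ℝ (Matrix n n ℝ) c *ᵥ x = c * (x ⬝ᵥ x) := by
  simp [Algebra.algebraMap_eq_smul_one, smul_mulVec, dotProduct_smul]

lemma IsHermitian.mem_Icc_of_mem_spectrum [Nonempty n] {A : Matrix n n ℝ}
    (hA : A.IsHermitian) {x : ℝ} (hx : x ∈ spectrum ℝ A) :
    x ∈ Set.Icc (⨅ i, hA.eigenvalues i) (⨆ i, hA.eigenvalues i) := by
  obtain ⟨i, rfl⟩ := hA.spectrum_real_eq_range_eigenvalues ▸ hx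
  exact ⟨ciInf_le (Set.finite_range _).bddBelow i, le_ciSup (Set.finite_range _).bddAbove i⟩

namespace PosDef

variable {A : Matrix n n ℝ}

lemma iInf_eigenvalues_pos [Nonempty n] (hA : A.PosDef) : 0 < ⨅ i, hA.1.eigenvalues i := by
  obtain ⟨i, hi⟩ := exists_eq_ciInf_of_finite (f := hA.1.eigenvalues)
  exact hi ▸ hA.eigenvalues_pos i

lemma iSup_eigenvalues_pos [Nonempty n] (hA : A.PosDef) : 0 < ⨆ i, hA.1.eigenvalues i :=
  hA.iInf_eigenvalues_pos.trans_le
    (ciInf_le_ciSup (Set.finite_range _).bddBelow (Set.finite_range _).bddAbove)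

lemma inv_eq_cfc (hA : A.PosDef) : A⁻¹ = cfc (·⁻¹ : ℝ → ℝ) A := by
  rw [nonsing_inv_eq_ringInverse, cfc_ringInverse_id (a := A) hA.isUnit hA.1.isSelfAdjoint]

lemma inv_le_algebraMap [Nonempty n] (hA : A.PosDef) :
    A⁻¹ ≤ algebraMap ℝ _ (⨅ i, hA.1.eigenvalues i)⁻¹ := by
  rw [hA.inv_eq_cfc]
  exact cfc_le_algebraMap _ _ _ (fun x hx => inv_anti₀ hA.iInf_eigenvalues_pos
    (hA.1.mem_Icc_of_mem_spectrum hx).1) (A.finite_real_spectrum.continuousOn _)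

lemma algebraMap_le_inv [Nonempty n] (hA : A.PosDef) :
    algebraMap ℝ _ (⨆ i, hA.1.eigenvalues i)⁻¹ ≤ A⁻¹ := by
  rw [hA.inv_eq_cfc]
  refine algebraMap_le_cfc _ _ _ (fun x hx => ?_) (A.finite_real_spectrum.continuousOn _)
  obtain ⟨hx_ge, hx_le⟩ := hA.1.mem_Icc_of_mem_spectrum hx
  exact inv_anti₀ (hA.iInf_eigenvalues_pos.trans_le hx_ge) hx_le

lemma dotProduct_inv_mulVec_nonneg (hA : A.PosDef) (x : n → ℝ) : 0 ≤ x ⬝ᵥ A⁻¹ *ᵥ x := by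
  simpa using hA.inv.posSemidef.dotProduct_mulVec_nonneg x

lemma dotProduct_inv_mulVec_le [Nonempty n] (hA : A.PosDef) (x : n → ℝ) :
    x ⬝ᵥ A⁻¹ *ᵥ x ≤ (x ⬝ᵥ x) / ⨅ i, hA.1.eigenvalues i := by
  simpa [dotProduct_algebraMap_mulVec, div_eq_inv_mul] using
    dotProduct_mulVec_le_of_le hA.inv_le_algebraMap x

lemma dotProduct_self_le_iSup_mul [Nonempty n] (hA : A.PosDef) (x : n → ℝ) :
    x ⬝ᵥ x ≤ (⨆ i, hA.1.eigenvalues i) * (x ⬝ᵥ A⁻¹ *ᵥ x) := by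
  rw [← inv_mul_le_iff₀ hA.iSup_eigenvalues_pos, ← dotProduct_algebraMap_mulVec]
  exact dotProduct_mulVec_le_of_le hA.algebraMap_le_inv x

end PosDef

end Matrix

/-- Sandwich upper bound: for pairwise orthogonal φ₁,…,φ_H with φ = ∑ φ_h and Σ
    symmetric positive definite,
    ∑_h ‖φ_h‖_{Σ⁻¹} ≤ √(H · λ_max(Σ)/λ_min(Σ)) · ‖φ‖_{Σ⁻¹}. -/
theorem sum_invnorm_le_sqrt_cond_mul_invnorm {d H : ℕ} (hd : 0 < d)
    (φ : Fin H → (Fin d → ℝ))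
    (horth : ∀ h h' : Fin H, h ≠ h' → φ h ⬝ᵥ φ h' = 0)
    (S : Matrix (Fin d) (Fin d) ℝ) (hS : S.PosDef) :
    haveI : Nonempty (Fin d) := Fin.pos_iff_nonempty.mp hd
    ∑ h, Real.sqrt (φ h ⬝ᵥ S⁻¹.mulVec (φ h)) ≤
      Real.sqrt ((H : ℝ) * ((⨆ i, hS.1.eigenvalues i) / (⨅ i, hS.1.eigenvalues i))) *
        Real.sqrt ((∑ h, φ h) ⬝ᵥ S⁻¹.mulVec (∑ h, φ h)) := by
  have : Nonempty (Fin d) := Fin.pos_iff_nonempty.mp hd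
  set m := ⨅ i, hS.1.eigenvalues i
  set M := ⨆ i, hS.1.eigenvalues i
  have hm : 0 < m := hS.iInf_eigenvalues_pos
  have hM : 0 < M := hS.iSup_eigenvalues_pos
  have hsum : ∑ h, φ h ⬝ᵥ S⁻¹ *ᵥ φ h ≤ M / m * ((∑ h, φ h) ⬝ᵥ S⁻¹ *ᵥ ∑ h, φ h) :=
    calc ∑ h, φ h ⬝ᵥ S⁻¹ *ᵥ φ h
        ≤ ∑ h, (φ h ⬝ᵥ φ h) / m := Finset.sum_le_sum fun h _ => hS.dotProduct_inv_mulVec_le _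
      _ = ((∑ h, φ h) ⬝ᵥ ∑ h, φ h) / m := by
        rw [sum_dotProduct_sum_of_orthogonal φ horth, Finset.sum_div]
      _ ≤ M * ((∑ h, φ h) ⬝ᵥ S⁻¹ *ᵥ ∑ h, φ h) / m := by
        gcongr; exact hS.dotProduct_self_le_iSup_mul _
      _ = _ := by ring
  calc ∑ h, √(φ h ⬝ᵥ S⁻¹ *ᵥ φ h)
      ≤ √(H * ∑ h, φ h ⬝ᵥ S⁻¹ *ᵥ φ h) := by
        simpa using Real.sum_sqrt_le_sqrt_card_mul_sum Finset.univ
          fun h => hS.dotProduct_inv_mulVec_nonneg (φ h)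
    _ ≤ √(H * (M / m * ((∑ h, φ h) ⬝ᵥ S⁻¹ *ᵥ ∑ h, φ h))) := by gcongr
    _ = √(H * (M / m)) * √((∑ h, φ h) ⬝ᵥ S⁻¹ *ᵥ ∑ h, φ h) := by
        rw [← mul_assoc, Real.sqrt_mul (by positivity)]
end
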